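/- arXiv:1808.06227 — 6 statements merged into one kernel-verified Lean document; each statement's English description precedes it below -/
import Mathlib

section
/- Let t₀ > 0, α > 1/2 and f ∈ L²((0,t₀)). Then for every t ∈ (0,t₀] the function x ↦ f(x)x^{α−1} is integrable on (0,t), and the function g(t) := t^{1−α}∫₀ᵗ f(x)x^{α−1}dx satisfies |g(t)| ≤ (2α−1)^{-1/2}‖f‖_{L²}·t^{1/2} for all t ∈ (0,t₀], and g is differentiable at almost every t ∈ (0,t₀) with g′(t) + (α − 1)g(t)/t = f(t) for almost every t ∈ (0,t₀). -/
/-!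
Cauchy–Schwarz against the weight `x ^ (α - 1)`, whose `L²(0,t)` norm is
`t ^ (α - 1/2) / √(2α - 1)` precisely because `α > 1/2`, gives integrability and the bound.
By the Lebesgue differentiation theorem the primitive `∫₀ᵗ f x x^{α-1} dx` has derivative
`f t t^{α-1}` at almost every `t`, and the product rule turns this into the differential equation.
-/

open MeasureTheory Set Filter Topology

namespace MeasureTheory

variable {X : Type*} [MeasurableSpace X] {μ : Measure X} {f w : X → ℝ}

theorem MemLp.toReal_eLpNorm_two_sq (hf : MemLp f 2 μ) :
    (eLpNorm f 2 μ).toReal ^ 2 = ∫ x, f x ^ 2 ∂μ := by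
  rw [← Lp.norm_toLp f hf, ← real_inner_self_eq_norm_sq, L2.inner_def]
  refine integral_congr_ae ?_
  filter_upwards [hf.coeFn_toLp] with x hx
  simp [hx, sq]

theorem MemLp.abs_integral_mul_le (hf : MemLp f 2 μ) (hw : MemLp w 2 μ) :
    |∫ x, f x * w x ∂μ| ≤ (eLpNorm f 2 μ).toReal * (eLpNorm w 2 μ).toReal := by
  rw [← Lp.norm_toLp f hf, ← Lp.norm_toLp w hw]
  convert abs_real_inner_le_norm (hf.toLp f) (hw.toLp w) using 2
  rw [L2.inner_def]
  refine integral_congr_ae ?_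
  filter_upwards [hf.coeFn_toLp, hw.coeFn_toLp] with x hfx hwx
  simp [hfx, hwx, mul_comm]

theorem IntegrableOn.ae_hasDerivAt_integral_Ioo {E : Type*} [NormedAddCommGroup E]
    [NormedSpace ℝ E] [CompleteSpace E] {F : ℝ → E} {a b : ℝ}
    (hF : IntegrableOn F (Ioo a b)) :
    ∀ᵐ t ∂volume.restrict (Ioo a b), HasDerivAt (fun u => ∫ x in Ioo a u, F x) (F t) t := by
  rcases lt_or_ge b a with hba | hab
  · simp [Ioo_eq_empty_of_le hba.le]
  have hFi : IntervalIntegrable F volume a b :=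
    (intervalIntegrable_iff_integrableOn_Ioo_of_le hab).2 hF
  filter_upwards [ae_restrict_of_ae hFi.ae_hasDerivAt_integral,
    ae_restrict_mem measurableSet_Ioo] with t hderiv ht
  have hIoo : ∀ᶠ u in 𝓝 t, ∫ x in a..u, F x = ∫ x in Ioo a u, F x := by
    filter_upwards [Ioi_mem_nhds ht.1] with u hu
    rw [intervalIntegral.integral_of_le (le_of_lt hu), integral_Ioc_eq_integral_Ioo]
  exact (hderiv (by rw [uIcc_of_le hab]; exact Ioo_subset_Icc_self ht) a
    left_mem_uIcc).congr_of_eventuallyEq (EventuallyEq.symm hIoo)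

end MeasureTheory

section Weight

variable {α t : ℝ}

theorem integral_Ioo_rpow_sub_one_sq (hα : 1 / 2 < α) (ht : 0 ≤ t) :
    ∫ x in Ioo 0 t, (x ^ (α - 1)) ^ 2 = t ^ (2 * α - 1) / (2 * α - 1) := by
  have hpow : EqOn (fun x : ℝ => (x ^ (α - 1)) ^ 2) (fun x => x ^ (2 * α - 2)) (Ioo 0 t) :=
    fun x hx => by dsimp only; rw [← Real.rpow_natCast, ← Real.rpow_mul hx.1.le]; ring_nf
  rw [setIntegral_congr_fun measurableSet_Ioo hpow, ← integral_Ioc_eq_integral_Ioo,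
    ← intervalIntegral.integral_of_le ht, integral_rpow (Or.inl (by linarith)),
    Real.zero_rpow (by linarith)]
  ring_nf

theorem memLp_two_rpow_sub_one (hα : 1 / 2 < α) (ht : 0 < t) :
    MemLp (fun x : ℝ => x ^ (α - 1)) 2 (volume.restrict (Ioo 0 t)) := by
  rw [memLp_two_iff_integrable_sq (by fun_prop)]
  refine ((intervalIntegral.integrableOn_Ioo_rpow_iff ht).2
    (show -1 < 2 * α - 2 by linarith)).congr_fun (fun x hx => ?_) measurableSet_Ioo
  rw [← Real.rpow_natCast, ← Real.rpow_mul hx.1.le]; ring_nf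

theorem toReal_eLpNorm_rpow_sub_one (hα : 1 / 2 < α) (ht : 0 < t) :
    (eLpNorm (fun x : ℝ => x ^ (α - 1)) 2 (volume.restrict (Ioo 0 t))).toReal
      = Real.sqrt (t ^ (2 * α - 1) / (2 * α - 1)) := by
  rw [← integral_Ioo_rpow_sub_one_sq hα ht.le,
    ← (memLp_two_rpow_sub_one hα ht).toReal_eLpNorm_two_sq, Real.sqrt_sq ENNReal.toReal_nonneg]

end Weight

noncomputable def weightedIntegral (α : ℝ) (f : ℝ → ℝ) (t : ℝ) : ℝ :=
  t ^ (1 - α) * ∫ x in Ioo 0 t, f x * x ^ (α - 1)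

section WeightedIntegral

variable {α t : ℝ} {f : ℝ → ℝ}

theorem integrableOn_mul_rpow_sub_one (hα : 1 / 2 < α) (ht : 0 < t)
    (hf : MemLp f 2 (volume.restrict (Ioo 0 t))) :
    IntegrableOn (fun x => f x * x ^ (α - 1)) (Ioo 0 t) :=
  hf.integrable_mul (memLp_two_rpow_sub_one hα ht) (q := 2)

theorem abs_weightedIntegral_le (hα : 1 / 2 < α) (ht : 0 < t)
    (hf : MemLp f 2 (volume.restrict (Ioo 0 t))) :
    |weightedIntegral α f t| ≤
      (Real.sqrt (2 * α - 1))⁻¹ * (eLpNorm f 2 (volume.restrict (Ioo 0 t))).toReal *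
        Real.sqrt t := by
  have hpow : t ^ (1 - α) * Real.sqrt (t ^ (2 * α - 1)) = Real.sqrt t := by
    rw [Real.sqrt_eq_rpow, Real.sqrt_eq_rpow, ← Real.rpow_mul ht.le, ← Real.rpow_add ht]
    ring_nf
  have hCS := hf.abs_integral_mul_le (memLp_two_rpow_sub_one hα ht)
  rw [toReal_eLpNorm_rpow_sub_one hα ht, Real.sqrt_div' _ (by linarith)] at hCS
  calc |weightedIntegral α f t|
      = t ^ (1 - α) * |∫ x in Ioo 0 t, f x * x ^ (α - 1)| := by
        rw [weightedIntegral, abs_mul, abs_of_nonneg (Real.rpow_nonneg ht.le _)]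
    _ ≤ t ^ (1 - α) * ((eLpNorm f 2 (volume.restrict (Ioo 0 t))).toReal *
          (Real.sqrt (t ^ (2 * α - 1)) / Real.sqrt (2 * α - 1))) := by
        gcongr
    _ = _ := by rw [← hpow]; ring

theorem ae_hasDerivAt_weightedIntegral {t₀ : ℝ}
    (hf : IntegrableOn (fun x => f x * x ^ (α - 1)) (Ioo 0 t₀)) :
    ∀ᵐ t ∂volume.restrict (Ioo 0 t₀),
      HasDerivAt (weightedIntegral α f) (f t - (α - 1) * weightedIntegral α f t / t) t := by
  filter_upwards [hf.ae_hasDerivAt_integral_Ioo, ae_restrict_mem measurableSet_Ioo]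
    with t hderiv ht
  have hprod := (Real.hasDerivAt_rpow_const (p := 1 - α) (Or.inl ht.1.ne')).mul hderiv
  refine hprod.congr_deriv ?_
  have hcancel : t ^ (1 - α) * t ^ (α - 1) = 1 := by
    rw [← Real.rpow_add ht.1]; norm_num
  rw [weightedIntegral, Real.rpow_sub ht.1, Real.rpow_one]
  field_simp
  linear_combination f t * hcancel

end WeightedIntegral

/-- For `t₀ > 0`, `α > 1/2` and `f ∈ L²((0,t₀))`, the function
`g(t) = t^{1-α} ∫₀ᵗ f(x) x^{α-1} dx` is well defined, satisfies
`|g(t)| ≤ (2α-1)^{-1/2} ‖f‖_{L²} t^{1/2}` and solves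
`g'(t) + (α-1) g(t)/t = f(t)` almost everywhere on `(0,t₀)`. -/
theorem stmt_1 (t₀ : ℝ) (ht₀ : 0 < t₀) (α : ℝ) (hα : 1/2 < α)
    (f : ℝ → ℝ) (hf : MemLp f 2 (volume.restrict (Ioo (0:ℝ) t₀))) :
    (∀ t ∈ Ioc (0:ℝ) t₀, IntegrableOn (fun x => f x * x ^ (α - 1)) (Ioo (0:ℝ) t)) ∧
    ∀ g : ℝ → ℝ,
      (∀ t : ℝ, g t = t ^ (1 - α) * ∫ x in Ioo (0:ℝ) t, f x * x ^ (α - 1)) →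
      (∀ t ∈ Ioc (0:ℝ) t₀,
          |g t| ≤ (Real.sqrt (2*α - 1))⁻¹ *
            (eLpNorm f 2 (volume.restrict (Ioo (0:ℝ) t₀))).toReal * Real.sqrt t) ∧
      (∀ᵐ t ∂(volume.restrict (Ioo (0:ℝ) t₀)),
          ∃ d : ℝ, HasDerivAt g d t ∧ d + (α - 1) * g t / t = f t) := by
  have hle : ∀ t ≤ t₀, volume.restrict (Ioo (0:ℝ) t) ≤ volume.restrict (Ioo 0 t₀) :=
    fun t ht => Measure.restrict_mono (Ioo_subset_Ioo_right ht) le_rfl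
  refine ⟨fun t ht => integrableOn_mul_rpow_sub_one hα ht.1 (hf.mono_measure (hle t ht.2)),
    fun g hg => ?_⟩
  obtain rfl : g = weightedIntegral α f := funext hg
  refine ⟨fun t ht => ?_, ?_⟩
  · have hnorm : (eLpNorm f 2 (volume.restrict (Ioo 0 t))).toReal ≤
        (eLpNorm f 2 (volume.restrict (Ioo 0 t₀))).toReal :=
      ENNReal.toReal_mono hf.eLpNorm_ne_top (eLpNorm_mono_measure f (hle t ht.2))
    refine (abs_weightedIntegral_le hα ht.1 (hf.mono_measure (hle t ht.2))).trans ?_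
    gcongr
  · filter_upwards [ae_hasDerivAt_weightedIntegral
      (integrableOn_mul_rpow_sub_one hα ht₀ hf)] with t hderiv
    exact ⟨_, hderiv, by ring⟩
end

section
/- Let t₀ > 0 and α > 1/2. The map K defined by (Kf)(t) = t^{1−α}∫₀ᵗ f(x)x^{α−1}dx for t ∈ (0,t₀] and (Kf)(0) = 0 is a well-defined bounded linear operator from L²((0,t₀)) to C⁰([0,t₀]) (in particular Kf extends continuously to t = 0 with value 0), and K is a compact operator. -/
open MeasureTheory Set Filter Topology

/-! For `0 ≤ t ≤ t₀`, `(Kf)(t)` is the `L²` inner product of `f` with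
`v t = t^{1-α} • 1_{(0,t)} x^{α-1}`, which lies in `L²` because `α > 1/2`. The Gram identity
`⟪1_{(0,s)} x^{α-1}, 1_{(0,t)} x^{α-1}⟫ = min(s,t)^{2α-1}/(2α-1)` makes `t ↦ v t` continuous on
`(0,t₀]`, and `‖v t‖ = √(t/(2α-1))` gives continuity at `0` with `v 0 = 0`. An operator
`f ↦ (t ↦ ⟪v t, f⟫)` with `v` continuous on a compact space is compact by Arzelà–Ascoli: the
image of the unit ball is bounded by `sup ‖v‖` and equicontinuous, since
`|⟪v s - v t, f⟫| ≤ ‖v s - v t‖`. -/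

namespace ContinuousMap

variable {X 𝕜 E : Type*} [TopologicalSpace X] [CompactSpace X] [NontriviallyNormedField 𝕜]
  [NormedAddCommGroup E] [NormedSpace 𝕜 E]

noncomputable def dualPairing (v : C(X, StrongDual 𝕜 E)) : E →L[𝕜] C(X, 𝕜) :=
  LinearMap.mkContinuous
    { toFun f := ⟨fun x => v x f, (ContinuousLinearMap.apply 𝕜 𝕜 f).continuous.comp v.continuous⟩
      map_add' f g := by ext x; exact map_add (v x) f g
      map_smul' c f := by ext x; exact map_smul (v x) c f }
    ‖v‖ fun f => (norm_le _ (by positivity)).2 fun x =>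
      (v x).le_of_opNorm_le (v.norm_coe_le_norm x) f

@[simp]
theorem dualPairing_apply (v : C(X, StrongDual 𝕜 E)) (f : E) (x : X) :
    dualPairing v f x = v x f :=
  rfl

theorem isCompactOperator_dualPairing [ProperSpace 𝕜] (v : C(X, StrongDual 𝕜 E)) :
    IsCompactOperator (dualPairing v) := by
  refine (isCompactOperator_iff_isCompact_closure_image_closedBall
    (dualPairing v : E →ₗ[𝕜] C(X, 𝕜)) one_pos).2 ?_
  set A := dualPairing v '' Metric.closedBall 0 1
  let e := isometryEquivBoundedOfCompact X 𝕜
  rw [← e.toHomeomorph.isCompact_image, e.toHomeomorph.image_closure]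
  refine BoundedContinuousFunction.arzela_ascoli (Metric.closedBall 0 ‖v‖)
    (isCompact_closedBall 0 _) _ ?_ fun x₀ => ?_
  · rintro _ x ⟨_, ⟨f, hf, rfl⟩, rfl⟩
    rw [mem_closedBall_zero_iff] at hf ⊢
    calc ‖v x f‖ ≤ ‖v x‖ * ‖f‖ := (v x).le_opNorm f
      _ ≤ ‖v‖ * 1 := by gcongr; exact v.norm_coe_le_norm x
      _ = ‖v‖ := mul_one _
  · refine Metric.equicontinuousAt_of_continuity_modulus (fun x => ‖v x₀ - v x‖) ?_ _ ?_
    · simpa using (v.continuous.tendsto x₀).const_sub (v x₀) |>.norm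
    · filter_upwards with x
      rintro ⟨_, ⟨_, ⟨f, hf, rfl⟩, rfl⟩⟩
      rw [mem_closedBall_zero_iff] at hf
      calc dist (v x₀ f) (v x f) = ‖(v x₀ - v x) f‖ := by simp [dist_eq_norm]
        _ ≤ ‖v x₀ - v x‖ * ‖f‖ := (v x₀ - v x).le_opNorm f
        _ ≤ ‖v x₀ - v x‖ := mul_le_of_le_one_right (norm_nonneg _) hf

end ContinuousMap

section
variable {α t₀ : ℝ}

theorem integral_rpow_mul_rpow_Ioo (hα : 1/2 < α) {t : ℝ} (ht : 0 ≤ t) :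
    ∫ x in Ioo 0 t, x ^ (α - 1) * x ^ (α - 1) = t ^ (2 * α - 1) / (2 * α - 1) := by
  have hsq : EqOn (fun x : ℝ => x ^ (α - 1) * x ^ (α - 1)) (fun x => x ^ (2 * α - 2)) (Ioo 0 t) :=
    fun x hx => by simp only [← Real.rpow_add hx.1]; ring_nf
  rw [setIntegral_congr_fun measurableSet_Ioo hsq, ← integral_Ioc_eq_integral_Ioo,
    ← intervalIntegral.integral_of_le ht, integral_rpow (Or.inl (by linarith)),
    Real.zero_rpow (by linarith)]
  ring_nf

theorem memLp_indicator_rpow_Ioo (hα : 1/2 < α) (s : Set ℝ) (t : ℝ) :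
    MemLp ((Ioo 0 t).indicator fun x => x ^ (α - 1)) 2 (volume.restrict s) := by
  have hsq : EqOn (fun x : ℝ => x ^ (2 * α - 2)) (fun x => (x ^ (α - 1)) ^ 2) (Ioo 0 t) :=
    fun x hx => by simp only [← Real.rpow_natCast, ← Real.rpow_mul hx.1.le]; ring_nf
  have hint : IntegrableOn (fun x : ℝ => (x ^ (α - 1)) ^ 2) (Ioo 0 t) :=
    ((intervalIntegral.intervalIntegrable_rpow' (by linarith)).1.mono_set
      Ioo_subset_Ioc_self).congr_fun hsq measurableSet_Ioo
  have hmeas : AEStronglyMeasurable (fun x : ℝ => x ^ (α - 1)) (volume.restrict (Ioo 0 t)) :=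
    (continuousOn_id.rpow_const fun x hx => Or.inl hx.1.ne').aestronglyMeasurable
      measurableSet_Ioo
  rw [memLp_indicator_iff_restrict measurableSet_Ioo]
  exact ((memLp_two_iff_integrable_sq hmeas).2 hint).mono_measure
    (Measure.restrict_mono subset_rfl Measure.restrict_le_self)

noncomputable def truncatedWeight (hα : 1/2 < α) (t₀ t : ℝ) :
    Lp ℝ 2 (volume.restrict (Ioo (0:ℝ) t₀)) :=
  (memLp_indicator_rpow_Ioo hα _ t).toLp _

theorem truncatedWeight_ae_eq (hα : 1/2 < α) (t : ℝ) :
    truncatedWeight hα t₀ t =ᵐ[volume.restrict (Ioo 0 t₀)]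
      (Ioo 0 t).indicator fun x => x ^ (α - 1) :=
  MemLp.coeFn_toLp _

theorem integrableOn_mul_rpow (hα : 1/2 < α) (f : Lp ℝ 2 (volume.restrict (Ioo (0:ℝ) t₀)))
    {t : ℝ} (ht : t ≤ t₀) : IntegrableOn (fun x => f x * x ^ (α - 1)) (Ioo 0 t) := by
  have hsub : Ioo (0:ℝ) t ⊆ Ioo 0 t₀ := Ioo_subset_Ioo_right ht
  have hf : MemLp f 2 (volume.restrict (Ioo 0 t)) :=
    (Lp.memLp f).mono_measure (Measure.restrict_mono hsub le_rfl)
  have hw : MemLp (fun x : ℝ => x ^ (α - 1)) 2 (volume.restrict (Ioo 0 t)) := by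
    simpa [memLp_indicator_iff_restrict measurableSet_Ioo] using
      memLp_indicator_rpow_Ioo hα univ t
  exact hf.integrable_mul hw

theorem inner_truncatedWeight (hα : 1/2 < α) (f : Lp ℝ 2 (volume.restrict (Ioo (0:ℝ) t₀)))
    {t : ℝ} (ht : t ≤ t₀) :
    inner ℝ (truncatedWeight hα t₀ t) f = ∫ x in Ioo 0 t, f x * x ^ (α - 1) := by
  have hae : (fun x => inner ℝ (truncatedWeight hα t₀ t x) (f x)) =ᵐ[volume.restrict (Ioo 0 t₀)]
      (Ioo 0 t).indicator fun x => f x * x ^ (α - 1) := by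
    filter_upwards [truncatedWeight_ae_eq hα t] with x hx
    by_cases hxt : x ∈ Ioo 0 t <;> simp [hx, hxt, mul_comm]
  rw [L2.inner_def, integral_congr_ae hae, integral_indicator measurableSet_Ioo,
    Measure.restrict_restrict_of_subset (Ioo_subset_Ioo_right ht)]

theorem inner_truncatedWeight_truncatedWeight (hα : 1/2 < α) {s t : ℝ}
    (hs : s ∈ Icc 0 t₀) (ht : t ∈ Icc 0 t₀) :
    inner ℝ (truncatedWeight hα t₀ s) (truncatedWeight hα t₀ t) =
      min s t ^ (2 * α - 1) / (2 * α - 1) := by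
  have hae : (fun x => truncatedWeight hα t₀ t x * x ^ (α - 1)) =ᵐ[volume.restrict (Ioo 0 s)]
      (Ioo 0 t).indicator fun x => x ^ (α - 1) * x ^ (α - 1) := by
    filter_upwards [ae_restrict_of_ae_restrict_of_subset (Ioo_subset_Ioo_right hs.2)
      (truncatedWeight_ae_eq hα t)] with x hx
    by_cases hxt : x ∈ Ioo 0 t <;> simp [hx, hxt]
  rw [inner_truncatedWeight hα _ hs.2, integral_congr_ae hae, setIntegral_indicator measurableSet_Ioo,
    Ioo_inter_Ioo, max_self, integral_rpow_mul_rpow_Ioo hα (le_min hs.1 ht.1)]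

theorem norm_truncatedWeight (hα : 1/2 < α) {t : ℝ} (ht : t ∈ Icc 0 t₀) :
    ‖truncatedWeight hα t₀ t‖ = √(t ^ (2 * α - 1) / (2 * α - 1)) := by
  rw [← Real.sqrt_sq (norm_nonneg _), ← real_inner_self_eq_norm_sq,
    inner_truncatedWeight_truncatedWeight hα ht ht, min_self]

theorem continuousOn_truncatedWeight (hα : 1/2 < α) :
    ContinuousOn (truncatedWeight hα t₀) (Icc 0 t₀) := by
  intro t ht
  set F : ℝ → ℝ := fun s => s ^ (2 * α - 1) / (2 * α - 1)
  have hF : Continuous F := (Real.continuous_rpow_const (by linarith)).div_const _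
  have hdist : ∀ s ∈ Icc 0 t₀,
      ‖truncatedWeight hα t₀ s - truncatedWeight hα t₀ t‖ = √(F s - 2 * F (min s t) + F t) := by
    intro s hs
    rw [← Real.sqrt_sq (norm_nonneg _), norm_sub_sq_real, ← real_inner_self_eq_norm_sq,
      ← real_inner_self_eq_norm_sq, inner_truncatedWeight_truncatedWeight hα hs hs,
      inner_truncatedWeight_truncatedWeight hα hs ht, inner_truncatedWeight_truncatedWeight hα ht ht,
      min_self, min_self]
  have hlim : Tendsto (fun s => √(F s - 2 * F (min s t) + F t)) (𝓝 t) (𝓝 0) := by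
    have hcont : Continuous fun s => √(F s - 2 * F (min s t) + F t) := by fun_prop
    simpa [min_self, show F t - 2 * F t + F t = 0 by ring] using hcont.tendsto t
  rw [ContinuousWithinAt, tendsto_iff_norm_sub_tendsto_zero]
  exact (hlim.mono_left nhdsWithin_le_nhds).congr'
    (eventually_nhdsWithin_of_forall fun s hs => (hdist s hs).symm)

noncomputable def scaledTruncatedWeight (hα : 1/2 < α) (t₀ t : ℝ) :
    Lp ℝ 2 (volume.restrict (Ioo (0:ℝ) t₀)) :=
  t ^ (1 - α) • truncatedWeight hα t₀ t

theorem norm_scaledTruncatedWeight (hα : 1/2 < α) {t : ℝ} (ht : t ∈ Icc 0 t₀) :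
    ‖scaledTruncatedWeight hα t₀ t‖ = √(t / (2 * α - 1)) := by
  rw [scaledTruncatedWeight, norm_smul, norm_truncatedWeight hα ht, Real.norm_eq_abs,
    abs_of_nonneg (Real.rpow_nonneg ht.1 _)]
  rcases ht.1.eq_or_lt with rfl | hpos
  · simp [Real.zero_rpow (by linarith : 2 * α - 1 ≠ 0)]
  · rw [← Real.sqrt_sq (Real.rpow_nonneg hpos.le _), ← Real.sqrt_mul (sq_nonneg _),
      ← Real.rpow_natCast, ← Real.rpow_mul hpos.le, mul_div_assoc', ← Real.rpow_add hpos,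
      show (1 - α) * ((2 : ℕ) : ℝ) + (2 * α - 1) = 1 by push_cast; ring, Real.rpow_one]

theorem scaledTruncatedWeight_zero (hα : 1/2 < α) (ht₀ : 0 ≤ t₀) :
    scaledTruncatedWeight hα t₀ 0 = 0 := by
  simpa using norm_scaledTruncatedWeight hα (left_mem_Icc.mpr ht₀)

theorem continuousOn_scaledTruncatedWeight (hα : 1/2 < α) :
    ContinuousOn (scaledTruncatedWeight hα t₀) (Icc 0 t₀) := by
  intro t ht
  rcases ht.1.eq_or_lt with rfl | hpos
  · have hlim : Tendsto (fun s : ℝ => √(s / (2 * α - 1))) (𝓝 0) (𝓝 0) :=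
      (by fun_prop : Continuous fun s : ℝ => √(s / (2 * α - 1))).tendsto' 0 0 (by simp)
    rw [ContinuousWithinAt, scaledTruncatedWeight_zero hα ht.2, tendsto_zero_iff_norm_tendsto_zero]
    exact (hlim.mono_left nhdsWithin_le_nhds).congr'
      (eventually_nhdsWithin_of_forall fun s hs => (norm_scaledTruncatedWeight hα hs).symm)
  · exact (Real.continuousAt_rpow_const t _ (Or.inl hpos.ne')).continuousWithinAt.smul
      (continuousOn_truncatedWeight hα t ht)

end

/-- For `t₀ > 0` and `α > 1/2`, the map `(Kf)(t) = t^{1-α} ∫₀ᵗ f(x) x^{α-1} dx`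
(`(Kf)(0) = 0`) is a well-defined bounded linear operator `L²((0,t₀)) → C⁰([0,t₀])`,
and `K` is a compact operator. -/
theorem stmt_5 (t₀ : ℝ) (ht₀ : 0 < t₀) (α : ℝ) (hα : 1/2 < α) :
    ∃ K : Lp ℝ 2 (volume.restrict (Ioo (0:ℝ) t₀)) →L[ℝ] C(Icc (0:ℝ) t₀, ℝ),
      IsCompactOperator K ∧
      ∀ f : Lp ℝ 2 (volume.restrict (Ioo (0:ℝ) t₀)),
        (∀ t ∈ Ioc (0:ℝ) t₀, IntegrableOn (fun x => f x * x ^ (α - 1)) (Ioo (0:ℝ) t)) ∧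
        K f ⟨0, left_mem_Icc.mpr ht₀.le⟩ = 0 ∧
        ∀ t (ht : t ∈ Ioc (0:ℝ) t₀),
          K f ⟨t, Ioc_subset_Icc_self ht⟩ =
            t ^ (1 - α) * ∫ x in Ioo (0:ℝ) t, f x * x ^ (α - 1) := by
  let v : C(Icc (0:ℝ) t₀, StrongDual ℝ (Lp ℝ 2 (volume.restrict (Ioo (0:ℝ) t₀)))) :=
    ⟨fun t => innerSL ℝ (scaledTruncatedWeight hα t₀ t),
      (innerSL ℝ).continuous.comp (continuousOn_scaledTruncatedWeight hα).domRestrict⟩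
  refine ⟨ContinuousMap.dualPairing v, ContinuousMap.isCompactOperator_dualPairing v, fun f =>
    ⟨fun t ht => integrableOn_mul_rpow hα f ht.2, ?_, fun t ht => ?_⟩⟩
  · simp [v, scaledTruncatedWeight_zero hα ht₀.le]
  · simp [v, scaledTruncatedWeight, inner_truncatedWeight hα f ht.2]
end

section
/- Let t₀ > 0 and α ≤ 1/2. The map K defined by (Kf)(t) = −t^{1−α}∫ₜ^{t₀} f(x)x^{α−1}dx for t ∈ (0,t₀] and (Kf)(0) = 0 is a well-defined bounded linear operator from L²((0,t₀)) to C⁰([0,t₀]) (in particular Kf extends continuously to t = 0 with value 0), and K is a compact operator. -/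
/-!
Writing `k t x = (t / x) ^ (1 - α)` for `x > t` and `0` otherwise, `(K f)(t) = -⟪k t, f⟫` in
`L²((0, t₀))`. Since `0 ≤ k t ≤ 1` and `t ↦ k t x` is continuous except at `t = x`, dominated
convergence makes `t ↦ k t` a continuous curve in `L²`. Pairing against a continuous curve `g` of
functionals on a compact space is a compact operator into continuous functions: the image of the
unit ball is bounded by `‖g‖` and has the modulus of continuity of `g`, so Arzelà–Ascoli applies.
-/

open MeasureTheory Set Filter Topology
open scoped ENNReal

namespace ContinuousMap

theorem isCompact_setOf_mem_of_dist_le_dist {X Y F : Type*} [TopologicalSpace X]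
    [PseudoMetricSpace Y] [MetricSpace F] (g : C(X, Y)) {s : Set F} (hs : IsCompact s) :
    IsCompact {φ : C(X, F) | (∀ x, φ x ∈ s) ∧ ∀ x y, dist (φ x) (φ y) ≤ dist (g x) (g y)} := by
  set Q : Set (X → F) := {h | (∀ x, h x ∈ s) ∧ ∀ x y, dist (h x) (h y) ≤ dist (g x) (g y)}
  have hQ_eq : ContinuousMap.toFun '' {φ : C(X, F) | ⇑φ ∈ Q} = Q := by
    refine Subset.antisymm (image_subset_iff.2 fun φ hφ => hφ) fun h hh => ?_
    have hcont : Continuous h := Metric.continuous_iff'.2 fun x ε hε =>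
      (Metric.continuous_iff'.1 g.continuous x ε hε).mono fun y hy => (hh.2 y x).trans_lt hy
    exact ⟨⟨h, hcont⟩, hh, rfl⟩
  have hQ_closed : IsClosed Q := by
    simp only [Q, ofPred_and, ofPred_forall]
    exact (isClosed_iInter fun x => hs.isClosed.preimage (continuous_apply x)).inter
      (isClosed_iInter fun x => isClosed_iInter fun y => isClosed_le (by fun_prop) continuous_const)
  refine ArzelaAscoli.isCompact_of_equicontinuous {φ : C(X, F) | ⇑φ ∈ Q} ?_ fun x₀ => ?_
  · rw [hQ_eq]
    exact (isCompact_univ_pi fun _ => hs).of_isClosed_subset hQ_closed fun h hh x _ => hh.1 x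
  · refine Metric.equicontinuousAt_iff_right.2 fun ε hε => ?_
    exact (Metric.continuous_iff'.1 g.continuous x₀ ε hε).mono fun x hx φ =>
      (φ.2.2 x₀ x).trans_lt (by rw [dist_comm]; exact hx)

variable {𝕜 X E F : Type*} [NontriviallyNormedField 𝕜] [TopologicalSpace X] [CompactSpace X]
  [NormedAddCommGroup E] [NormedSpace 𝕜 E] [NormedAddCommGroup F] [NormedSpace 𝕜 F]

noncomputable def flipCLM (g : C(X, E →L[𝕜] F)) : E →L[𝕜] C(X, F) :=
  LinearMap.mkContinuous
    { toFun f := ⟨fun x => g x f, g.continuous.clm_apply continuous_const⟩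
      map_add' f f' := by ext x; exact map_add (g x) f f'
      map_smul' c f := by ext x; exact map_smul (g x) c f }
    ‖g‖ fun f => (norm_le _ (by positivity)).2 fun x =>
      (g x).le_of_opNorm_le (norm_coe_le_norm g x) f

@[simp]
theorem flipCLM_apply (g : C(X, E →L[𝕜] F)) (f : E) (x : X) : flipCLM g f x = g x f := rfl

theorem isCompactOperator_flipCLM [ProperSpace F] (g : C(X, E →L[𝕜] F)) :
    IsCompactOperator (flipCLM g) := by
  refine ⟨_, isCompact_setOf_mem_of_dist_le_dist g (isCompact_closedBall (0 : F) ‖g‖),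
    Metric.closedBall_mem_nhds 0 one_pos |> mem_of_superset <| fun f hf => ?_⟩
  rw [mem_closedBall_zero_iff] at hf
  refine ⟨fun x => ?_, fun x y => ?_⟩
  · rw [flipCLM_apply, mem_closedBall_zero_iff]
    exact (g x).le_of_opNorm_le_of_le (norm_coe_le_norm g x) hf |>.trans_eq (mul_one _)
  · rw [flipCLM_apply, flipCLM_apply, dist_eq_norm, dist_eq_norm, ← _root_.sub_apply]
    exact (g x - g y).le_of_opNorm_le_of_le le_rfl hf |>.trans_eq (mul_one _)

end ContinuousMap

theorem MeasureTheory.Lp.tendsto_toLp_of_dominated {α E ι : Type*} [MeasurableSpace α]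
    {μ : Measure α} [NormedAddCommGroup E] {p : ℝ≥0∞} [Fact (1 ≤ p)] (hp : p ≠ ∞)
    {l : Filter ι} [l.IsCountablyGenerated] {F : ι → α → E} {f : α → E}
    (hF : ∀ i, MemLp (F i) p μ) (hf : MemLp f p μ) {bound : α → ℝ} (hbound : MemLp bound p μ)
    (h_le : ∀ i, ∀ᵐ x ∂μ, ‖F i x - f x‖ ≤ bound x)
    (h_lim : ∀ᵐ x ∂μ, Tendsto (F · x) l (𝓝 (f x))) :
    Tendsto (fun i => (hF i).toLp (F i)) l (𝓝 (hf.toLp f)) := by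
  have hp0 : p ≠ 0 := (zero_lt_one.trans_le Fact.out).ne'
  have hp_pos : 0 < p.toReal := ENNReal.toReal_pos hp0 hp
  rw [Lp.tendsto_Lp_iff_tendsto_eLpNorm'']
  simp_rw [eLpNorm_eq_lintegral_rpow_enorm_toReal hp0 hp]
  have h_int : Tendsto (fun i => ∫⁻ x, ‖(F i - f) x‖ₑ ^ p.toReal ∂μ) l (𝓝 0) := by
    rw [← lintegral_zero]
    refine tendsto_lintegral_filter_of_dominated_convergence' (fun x => ‖bound x‖ₑ ^ p.toReal)
      (Eventually.of_forall fun i => ((hF i).sub hf).aestronglyMeasurable.enorm.pow_const _)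
      (Eventually.of_forall fun i => (h_le i).mono fun x hx => ?_)
      (lintegral_rpow_enorm_lt_top_of_eLpNorm_lt_top hp0 hp hbound.eLpNorm_lt_top).ne ?_
    · exact ENNReal.rpow_le_rpow (enorm_le_iff_norm_le.2 (hx.trans (Real.le_norm_self _)))
        hp_pos.le
    · refine h_lim.mono fun x hx => ?_
      have := ((tendsto_sub_nhds_zero_iff.2 hx).enorm).ennrpow_const p.toReal
      simpa [ENNReal.zero_rpow_of_pos hp_pos] using this
  simpa [ENNReal.zero_rpow_of_pos (inv_pos.2 hp_pos)] using
    h_int.ennrpow_const (1 / p.toReal)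

namespace WeightedVolterra

variable {α t₀ : ℝ}

noncomputable def kernel (α t : ℝ) : ℝ → ℝ := (Ioi t).indicator fun x => (t / x) ^ (1 - α)

theorem measurable_kernel (α t : ℝ) : Measurable (kernel α t) :=
  ((measurable_const.div measurable_id).pow_const _).indicator measurableSet_Ioi

theorem kernel_mem_Icc (hα : α ≤ 1) {t : ℝ} (ht : 0 ≤ t) (x : ℝ) : kernel α t x ∈ Icc 0 1 := by
  by_cases hx : t < x
  · have hx0 : 0 < x := ht.trans_lt hx
    rw [kernel, indicator_of_mem (show x ∈ Ioi t from hx)]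
    exact ⟨by positivity, Real.rpow_le_one (by positivity) ((div_le_one hx0).2 hx.le)
      (sub_nonneg.2 hα)⟩
  · rw [kernel, indicator_of_notMem (show x ∉ Ioi t from hx)]
    exact ⟨le_rfl, zero_le_one⟩

theorem continuousAt_kernel (hα : α ≤ 1) {s x : ℝ} (hx : x ≠ s) :
    ContinuousAt (fun t => kernel α t x) s := by
  rcases hx.lt_or_gt with h | h
  · refine (continuousAt_const (y := (0 : ℝ))).congr ((eventually_gt_nhds h).mono fun t ht => ?_)
    simp only [kernel, indicator_of_notMem (show x ∉ Ioi t from not_lt.2 ht.le)]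
  · refine ((continuousAt_id.div_const x).rpow_const (Or.inr (sub_nonneg.2 hα))).congr
      ((eventually_lt_nhds h).mono fun t ht => ?_)
    simp only [kernel, indicator_of_mem (show x ∈ Ioi t from ht), id]

theorem memLp_kernel (hα : α ≤ 1) {t : ℝ} (ht : 0 ≤ t) (p : ℝ≥0∞) (μ : Measure ℝ)
    [IsFiniteMeasure μ] : MemLp (kernel α t) p μ :=
  .of_bound (measurable_kernel α t).aestronglyMeasurable 1 <| .of_forall fun x => by
    rw [Real.norm_of_nonneg (kernel_mem_Icc hα ht x).1]
    exact (kernel_mem_Icc hα ht x).2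

noncomputable def kernelLp (μ : Measure ℝ) [IsFiniteMeasure μ] (hα : α ≤ 1) (t : Icc 0 t₀) :
    Lp ℝ 2 μ :=
  (memLp_kernel hα t.2.1 2 μ).toLp _

theorem continuous_kernelLp (μ : Measure ℝ) [IsFiniteMeasure μ] [NullSingletonClass μ]
    (hα : α ≤ 1) : Continuous (kernelLp (t₀ := t₀) μ hα) := by
  refine continuous_iff_continuousAt.2 fun s => Lp.tendsto_toLp_of_dominated ENNReal.ofNat_ne_top
    _ _ (memLp_const 1) (fun t => .of_forall fun x => ?_) ?_
  · rw [← dist_eq_norm]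
    exact Real.dist_le_of_mem_Icc_01 (kernel_mem_Icc hα t.2.1 x) (kernel_mem_Icc hα s.2.1 x)
  · filter_upwards [μ.ae_ne (s : ℝ)] with x hx
    exact (continuousAt_kernel hα hx).tendsto.comp continuous_subtype_val.continuousAt

theorem inner_kernelLp (hα : α ≤ 1) (f : Lp ℝ 2 (volume.restrict (Ioo 0 t₀))) (t : Icc 0 t₀) :
    inner ℝ (kernelLp _ hα t) f = t ^ (1 - α) * ∫ x in Ioo (t : ℝ) t₀, f x * x ^ (α - 1) := by
  have ht : (0 : ℝ) ≤ t := t.2.1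
  rw [L2.inner_def]
  calc ∫ x, inner ℝ (kernelLp _ hα t x) (f x) ∂volume.restrict (Ioo 0 t₀)
      = ∫ x, (Ioi (t : ℝ)).indicator (fun x => (t / x) ^ (1 - α) * f x) x
          ∂volume.restrict (Ioo 0 t₀) := by
        refine integral_congr_ae (((memLp_kernel hα ht 2 _).coeFn_toLp).mono fun x hx => ?_)
        dsimp only
        rw [kernelLp, hx, kernel, real_inner_comm, RCLike.inner_apply, conj_trivial]
        by_cases hxt : (t : ℝ) < x <;> simp [hxt]
    _ = ∫ x in Ioo (t : ℝ) t₀, (t / x) ^ (1 - α) * f x := by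
        rw [integral_indicator measurableSet_Ioi, Measure.restrict_restrict measurableSet_Ioi,
          Ioi_inter_Ioo, max_eq_left ht]
    _ = ∫ x in Ioo (t : ℝ) t₀, t ^ (1 - α) * (f x * x ^ (α - 1)) := by
        refine setIntegral_congr_fun measurableSet_Ioo fun x hx => ?_
        have hx0 : 0 ≤ x := ht.trans hx.1.le
        rw [Real.div_rpow ht hx0, ← neg_sub α 1, Real.rpow_neg hx0, div_inv_eq_mul]
        ring
    _ = _ := integral_const_mul _ _

theorem integrableOn_mul_rpow (f : Lp ℝ 2 (volume.restrict (Ioo 0 t₀))) {t : ℝ} (ht : 0 < t)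
    (β : ℝ) : IntegrableOn (fun x => f x * x ^ β) (Ioo t t₀) := by
  have h : IntegrableOn (fun x => f x * x ^ β) (Icc t t₀) (volume.restrict (Ioo 0 t₀)) :=
    ((Lp.memLp f).integrable one_le_two).integrableOn.mul_continuousOn
      (continuousOn_id.rpow_const fun x hx => Or.inl (ht.trans_le hx.1).ne') isCompact_Icc
  rw [IntegrableOn, Measure.restrict_restrict measurableSet_Icc] at h
  exact IntegrableOn.mono_set h (subset_inter Ioo_subset_Icc_self (Ioo_subset_Ioo_left ht.le))

noncomputable def operator (hα : α ≤ 1) :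
    Lp ℝ 2 (volume.restrict (Ioo 0 t₀)) →L[ℝ] C(Icc (0 : ℝ) t₀, ℝ) :=
  -ContinuousMap.flipCLM
    ⟨fun t => innerSL ℝ (kernelLp _ hα t), (innerSL ℝ).continuous.comp (continuous_kernelLp _ hα)⟩

theorem operator_apply (hα : α ≤ 1) (f : Lp ℝ 2 (volume.restrict (Ioo 0 t₀))) (t : Icc 0 t₀) :
    operator hα f t = -(t ^ (1 - α)) * ∫ x in Ioo (t : ℝ) t₀, f x * x ^ (α - 1) := by
  simp [operator, inner_kernelLp]

theorem isCompactOperator_operator (hα : α ≤ 1) :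
    IsCompactOperator (operator (t₀ := t₀) hα) :=
  (ContinuousMap.isCompactOperator_flipCLM _).neg

end WeightedVolterra

open WeightedVolterra in
/-- For `t₀ > 0` and `α ≤ 1/2`, the map `(Kf)(t) = -t^{1-α} ∫ₜ^{t₀} f(x) x^{α-1} dx`
(`(Kf)(0) = 0`) is a well-defined bounded linear operator `L²((0,t₀)) → C⁰([0,t₀])`,
and `K` is a compact operator. -/
theorem stmt_6 (t₀ : ℝ) (ht₀ : 0 < t₀) (α : ℝ) (hα : α ≤ 1/2) :
    ∃ K : Lp ℝ 2 (volume.restrict (Ioo (0:ℝ) t₀)) →L[ℝ] C(Icc (0:ℝ) t₀, ℝ),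
      IsCompactOperator K ∧
      ∀ f : Lp ℝ 2 (volume.restrict (Ioo (0:ℝ) t₀)),
        (∀ t ∈ Ioc (0:ℝ) t₀, IntegrableOn (fun x => f x * x ^ (α - 1)) (Ioo t t₀)) ∧
        K f ⟨0, left_mem_Icc.mpr ht₀.le⟩ = 0 ∧
        ∀ t (ht : t ∈ Ioc (0:ℝ) t₀),
          K f ⟨t, Ioc_subset_Icc_self ht⟩ =
            -(t ^ (1 - α)) * ∫ x in Ioo t t₀, f x * x ^ (α - 1) := by
  have hα₁ : α ≤ 1 := by linarith
  refine ⟨operator hα₁, isCompactOperator_operator hα₁, fun f =>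
    ⟨fun t ht => integrableOn_mul_rpow f ht.1 _, ?_, fun t _ => operator_apply hα₁ f _⟩⟩
  rw [operator_apply, Real.zero_rpow (by linarith), neg_zero, zero_mul]
end

section
/- Suppose k ≥ 1, n ≠ 0 and a > 0. Let v : (0,∞) → ℂ² be continuous, differentiable on (0,1) and on (1,∞), and satisfy the linear ODE v′(r) = (1/r)·A·v(r) for all r ∈ (0,1) and v′(r) = B·v(r) for all r ∈ (1,∞). If ∫₀^∞ r²‖v(r)‖² dr < ∞, then v is identically zero. -/
/-!
On `(1, ∞)` the system is diagonal: `v₁ = e^{a(r-1)} v₁(1)` and `v₂ = e^{-a(r-1)} v₂(1)`,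
so square-integrability forces `v₁(1) = 0`. On `(0, 1)` it is an Euler system
`r v' = A v`; the eigenvalues of `A` are `-1 ± μ` with `μ = √(k²/4 + n²) > k/2 ≥ 1/2`, and pairing
`v` with a left eigenvector `ℓ_λ` of `A` gives `ℓ_λ(v r) = r^λ ℓ_λ(v 1)`. For `λ = -1 - μ` the
function `r² |r^λ|² = r^{-2μ}` is not integrable at `0`, hence `ℓ_{-1-μ}(v 1) = 0`, which together
with `v₁(1) = 0` and `n ≠ 0` gives `v(1) = 0`. Then both `ℓ_{-1±μ}(v r)` vanish on `(0, 1]`, and the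
exponential formulas make `v` vanish on `[1, ∞)`.
-/

open MeasureTheory Set

theorem norm_smul_add_smul_sq_le {𝕜 E : Type*} [NormedField 𝕜] [NormedAddCommGroup E]
    [NormedSpace 𝕜 E] (α β : 𝕜) (x y : E) :
    ‖α • x + β • y‖ ^ 2 ≤ (‖α‖ ^ 2 + ‖β‖ ^ 2) * (‖x‖ ^ 2 + ‖y‖ ^ 2) := by
  have htri : ‖α • x + β • y‖ ≤ ‖α‖ * ‖x‖ + ‖β‖ * ‖y‖ := by
    simpa only [norm_smul] using norm_add_le (α • x) (β • y)
  calc ‖α • x + β • y‖ ^ 2 ≤ (‖α‖ * ‖x‖ + ‖β‖ * ‖y‖) ^ 2 := by gcongr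
    _ ≤ (‖α‖ ^ 2 + ‖β‖ ^ 2) * (‖x‖ ^ 2 + ‖y‖ ^ 2) := by
      nlinarith [sq_nonneg (‖α‖ * ‖y‖ - ‖β‖ * ‖x‖)]

theorem integrableOn_of_lintegral_ofReal_lt_top {f : ℝ → ℝ} {s : Set ℝ} (hs : MeasurableSet s)
    (hf : ContinuousOn f s) (hf0 : ∀ x ∈ s, 0 ≤ f x)
    (h : ∫⁻ x in s, ENNReal.ofReal (f x) < ⊤) : IntegrableOn f s :=
  ⟨hf.aestronglyMeasurable hs,
    (hasFiniteIntegral_iff_ofReal (ae_restrict_of_forall_mem hs hf0)).2 h⟩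

theorem integrableOn_sq_mul_norm_sq_of_le {E : Type*} [NormedAddCommGroup E] {p : ℝ → E}
    {w : ℝ → ℝ} {s : Set ℝ} {C : ℝ} (hs : MeasurableSet s)
    (hw : IntegrableOn (fun r => r ^ 2 * w r) s) (hp : ContinuousOn p s)
    (hle : ∀ r ∈ s, ‖p r‖ ^ 2 ≤ C * w r) : IntegrableOn (fun r => r ^ 2 * ‖p r‖ ^ 2) s := by
  have hmeas : ContinuousOn (fun r => r ^ 2 * ‖p r‖ ^ 2) s := by fun_prop
  refine (hw.const_mul C).mono' (hmeas.aestronglyMeasurable hs)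
    (ae_restrict_of_forall_mem hs fun r hr => ?_)
  rw [Real.norm_of_nonneg (by positivity), mul_left_comm]
  exact mul_le_mul_of_nonneg_left (hle r hr) (sq_nonneg r)

section ProdDeriv

variable {𝕜 E F : Type*} [NontriviallyNormedField 𝕜] [NormedAddCommGroup E] [NormedSpace 𝕜 E]
  [NormedAddCommGroup F] [NormedSpace 𝕜 F] {f : 𝕜 → E × F} {f' : E × F} {x : 𝕜}

protected theorem HasDerivAt.fst (h : HasDerivAt f f' x) :
    HasDerivAt (fun t => (f t).1) f'.1 x :=
  (hasFDerivAt_fst (p := f x)).comp_hasDerivAt x h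

protected theorem HasDerivAt.snd (h : HasDerivAt f f' x) :
    HasDerivAt (fun t => (f t).2) f'.2 x :=
  (hasFDerivAt_snd (p := f x)).comp_hasDerivAt x h

end ProdDeriv

section ScalarODE

variable {E : Type*} [NormedAddCommGroup E] [NormedSpace ℝ E]

theorem eq_of_hasDerivAt_zero_Ioo {q : ℝ → E} {x y : ℝ} (hxy : x ≤ y)
    (hq : ContinuousOn q (Icc x y)) (hd : ∀ t ∈ Ioo x y, HasDerivAt q 0 t) : q y = q x := by
  rcases hxy.eq_or_lt with rfl | hlt
  · rfl
  have hmid : (x + y) / 2 ∈ Ioo x y := ⟨by linarith, by linarith⟩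
  have hconst : EqOn q (fun _ => q ((x + y) / 2)) (Ioo x y) := fun t ht =>
    isOpen_Ioo.is_const_of_deriv_eq_zero isPreconnected_Ioo
      (fun s hs => (hd s hs).differentiableAt.differentiableWithinAt)
      (fun s hs => (hd s hs).deriv) ht hmid
  have hIcc := hconst.of_subset_closure hq continuousOn_const Ioo_subset_Icc_self
    (closure_Ioo hlt.ne).ge
  rw [hIcc (right_mem_Icc.2 hxy), hIcc (left_mem_Icc.2 hxy)]

theorem eq_rpow_smul_of_hasDerivAt {p : ℝ → E} {lam : ℝ} (hc : ContinuousOn p (Ioc 0 1))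
    (hd : ∀ t ∈ Ioo (0 : ℝ) 1, HasDerivAt p ((lam / t) • p t) t) {r : ℝ} (hr : r ∈ Ioc 0 1) :
    p r = r ^ lam • p 1 := by
  have hq : (1 : ℝ) ^ (-lam) • p 1 = r ^ (-lam) • p r := by
    refine eq_of_hasDerivAt_zero_Ioo (q := fun t => t ^ (-lam) • p t) hr.2 ?_ fun t ht => ?_
    · have hpos : ∀ t ∈ Icc r 1, 0 < t := fun t ht => hr.1.trans_le ht.1
      exact (continuousOn_id.rpow_const fun t ht => Or.inl (hpos t ht).ne').smul
        (hc.mono fun t ht => ⟨hpos t ht, ht.2⟩)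
    · have ht0 : 0 < t := hr.1.trans ht.1
      refine ((Real.hasDerivAt_rpow_const (p := -lam) (Or.inl ht0.ne')).smul
        (hd t ⟨ht0, ht.2⟩)).congr_deriv ?_
      rw [smul_smul, Real.rpow_sub_one ht0.ne', ← add_smul]
      convert zero_smul ℝ (p t) using 2
      ring
  rw [Real.one_rpow, one_smul] at hq
  rw [hq, smul_smul, ← Real.rpow_add hr.1, add_neg_cancel, Real.rpow_zero, one_smul]

theorem eq_exp_smul_of_hasDerivAt {p : ℝ → E} {b x₀ : ℝ} (hc : ContinuousOn p (Ici x₀))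
    (hd : ∀ t ∈ Ioi x₀, HasDerivAt p (b • p t) t) {r : ℝ} (hr : x₀ ≤ r) :
    p r = Real.exp (b * (r - x₀)) • p x₀ := by
  have hq : Real.exp (-b * (r - x₀)) • p r = Real.exp (-b * (x₀ - x₀)) • p x₀ := by
    refine eq_of_hasDerivAt_zero_Ioo (q := fun t => Real.exp (-b * (t - x₀)) • p t) hr ?_
      fun t ht => ?_
    · exact (by fun_prop : Continuous fun t => Real.exp (-b * (t - x₀))).continuousOn.smul
        (hc.mono Icc_subset_Ici_self)
    · have hexp : HasDerivAt (fun t => Real.exp (-b * (t - x₀)))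
          (Real.exp (-b * (t - x₀)) * -b) t := by
        simpa using (((hasDerivAt_id t).sub_const x₀).const_mul (-b)).exp
      refine (hexp.smul (hd t ht.1)).congr_deriv ?_
      rw [smul_smul, ← add_smul]
      convert zero_smul ℝ (p t) using 2
      ring
  rw [sub_self, mul_zero, Real.exp_zero, one_smul] at hq
  rw [← hq, smul_smul, ← Real.exp_add]
  simp

theorem eq_zero_of_integrableOn_Ioi {p : ℝ → E} {b : ℝ} (hb : 0 ≤ b)
    (hp : ∀ r, 1 ≤ r → p r = Real.exp (b * (r - 1)) • p 1)
    (hint : IntegrableOn (fun r => r ^ 2 * ‖p r‖ ^ 2) (Ioi 1)) : p 1 = 0 := by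
  have hle : ∀ r ∈ Ioi (1 : ℝ), ‖‖p 1‖ ^ 2‖ ≤ r ^ 2 * ‖p r‖ ^ 2 := fun r hr => by
    have hr1 : (1 : ℝ) ≤ r := le_of_lt hr
    have hnorm : ‖p 1‖ ≤ ‖p r‖ := by
      rw [hp r hr1, norm_smul, Real.norm_of_nonneg (Real.exp_pos _).le]
      exact le_mul_of_one_le_left (norm_nonneg _) (Real.one_le_exp (by nlinarith))
    rw [Real.norm_of_nonneg (by positivity)]
    calc ‖p 1‖ ^ 2 ≤ ‖p r‖ ^ 2 := by gcongr
      _ ≤ r ^ 2 * ‖p r‖ ^ 2 := le_mul_of_one_le_left (by positivity) (one_le_pow₀ hr1)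
  have hconst : IntegrableOn (fun _ => ‖p 1‖ ^ 2) (Ioi (1 : ℝ)) :=
    hint.mono' aestronglyMeasurable_const (ae_restrict_of_forall_mem measurableSet_Ioi hle)
  simpa [Real.volume_Ioi] using hconst

theorem eq_zero_of_integrableOn_Ioo {p : ℝ → E} {lam : ℝ} (hlam : lam ≤ -3 / 2)
    (hp : ∀ r ∈ Ioc (0 : ℝ) 1, p r = r ^ lam • p 1)
    (hint : IntegrableOn (fun r => r ^ 2 * ‖p r‖ ^ 2) (Ioo 0 1)) : p 1 = 0 := by
  by_contra h
  have hpow : IntegrableOn (fun r : ℝ => r ^ (2 + 2 * lam)) (Ioo 0 1) := by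
    refine IntegrableOn.congr_fun (hint.div_const (‖p 1‖ ^ 2)) (fun r hr => ?_) measurableSet_Ioo
    rw [hp r (Ioo_subset_Ioc_self hr), norm_smul,
      Real.norm_of_nonneg (Real.rpow_pos_of_pos hr.1 _).le, Real.rpow_add hr.1, mul_comm 2 lam,
      Real.rpow_mul hr.1.le, Real.rpow_two, Real.rpow_two]
    field_simp
  rw [intervalIntegral.integrableOn_Ioo_rpow_iff zero_lt_one] at hpow
  linarith

end ScalarODE

namespace Monopole

theorem eq_exp_smul_of_exterior {a : ℝ} {v : ℝ → ℂ × ℂ} (hc : ContinuousOn v (Ici 1))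
    (hode : ∀ r ∈ Ioi (1 : ℝ), HasDerivAt v ((a : ℂ) * (v r).1, -(a : ℂ) * (v r).2) r)
    {r : ℝ} (hr : 1 ≤ r) :
    v r = (Real.exp (a * (r - 1)) • (v 1).1, Real.exp (-a * (r - 1)) • (v 1).2) :=
  Prod.ext
    (eq_exp_smul_of_hasDerivAt hc.fst
      (fun t ht => by simpa only [Complex.real_smul] using (hode t ht).fst) hr)
    (eq_exp_smul_of_hasDerivAt hc.snd
      (fun t ht => by simpa [Complex.real_smul] using (hode t ht).snd) hr)

theorem fst_eq_zero_of_exterior {a : ℝ} (ha : 0 ≤ a) {v : ℝ → ℂ × ℂ}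
    (hc : ContinuousOn v (Ici 1))
    (hode : ∀ r ∈ Ioi (1 : ℝ), HasDerivAt v ((a : ℂ) * (v r).1, -(a : ℂ) * (v r).2) r)
    (hw : IntegrableOn (fun r => r ^ 2 * (‖(v r).1‖ ^ 2 + ‖(v r).2‖ ^ 2)) (Ioi 1)) :
    (v 1).1 = 0 := by
  refine eq_zero_of_integrableOn_Ioi (p := fun r => (v r).1) ha
    (fun r hr => by rw [eq_exp_smul_of_exterior hc hode hr]) ?_
  refine integrableOn_sq_mul_norm_sq_of_le (C := 1) measurableSet_Ioi hw
    (hc.fst.mono Ioi_subset_Ici_self) fun r _ => ?_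
  nlinarith [sq_nonneg ‖(v r).2‖]

variable (k n : ℝ)

noncomputable def A (x : ℂ × ℂ) : ℂ × ℂ :=
  (-(2 + (k : ℂ)) / 2 * x.1 + Complex.I * n * x.2,
    -(Complex.I * n) * x.1 - (2 - (k : ℂ)) / 2 * x.2)

def SolvesInterior (v : ℝ → ℂ × ℂ) : Prop :=
  ∀ r ∈ Ioo (0 : ℝ) 1, HasDerivAt v ((A k n (v r)).1 / r, (A k n (v r)).2 / r) r

noncomputable def leftEigen (lam : ℝ) (x : ℂ × ℂ) : ℂ :=
  -(Complex.I * n) * x.1 + (lam + (2 + (k : ℂ)) / 2) * x.2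

variable {k n}

theorem leftEigen_A {lam : ℝ} (hlam : (lam + 1) ^ 2 = k ^ 2 / 4 + n ^ 2) (x : ℂ × ℂ) :
    leftEigen k n lam (A k n x) = lam * leftEigen k n lam x := by
  have hlamℂ : ((lam : ℂ) + 1) ^ 2 = (k : ℂ) ^ 2 / 4 + (n : ℂ) ^ 2 := by
    exact_mod_cast congrArg Complex.ofReal hlam
  simp only [leftEigen, A]
  linear_combination (-x.2) * hlamℂ - (n : ℂ) ^ 2 * x.2 * Complex.I_sq

theorem continuousOn_leftEigen {lam : ℝ} {v : ℝ → ℂ × ℂ} {s : Set ℝ} (hc : ContinuousOn v s) :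
    ContinuousOn (fun r => leftEigen k n lam (v r)) s := by
  unfold leftEigen
  fun_prop

theorem eq_rpow_smul_leftEigen {lam : ℝ} (hlam : (lam + 1) ^ 2 = k ^ 2 / 4 + n ^ 2)
    {v : ℝ → ℂ × ℂ} (hc : ContinuousOn v (Ioc 0 1)) (hode : SolvesInterior k n v) {r : ℝ}
    (hr : r ∈ Ioc 0 1) : leftEigen k n lam (v r) = r ^ lam • leftEigen k n lam (v 1) := by
  refine eq_rpow_smul_of_hasDerivAt (continuousOn_leftEigen hc) (fun t ht => ?_) hr
  have hd := ((hode t ht).fst.const_mul (-(Complex.I * n))).add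
    ((hode t ht).snd.const_mul (lam + (2 + (k : ℂ)) / 2))
  refine hd.congr_deriv ?_
  have hAv := leftEigen_A hlam (v t)
  simp only [leftEigen] at hAv ⊢
  rw [Complex.real_smul, Complex.ofReal_div, div_mul_eq_mul_div, ← hAv]
  ring

theorem leftEigen_eq_zero_of_integrableOn {lam : ℝ} (hlam : (lam + 1) ^ 2 = k ^ 2 / 4 + n ^ 2)
    (hlam' : lam ≤ -3 / 2) {v : ℝ → ℂ × ℂ} (hc : ContinuousOn v (Ioc 0 1))
    (hode : SolvesInterior k n v)
    (hw : IntegrableOn (fun r => r ^ 2 * (‖(v r).1‖ ^ 2 + ‖(v r).2‖ ^ 2)) (Ioo 0 1)) :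
    leftEigen k n lam (v 1) = 0 := by
  refine eq_zero_of_integrableOn_Ioo (p := fun r => leftEigen k n lam (v r)) hlam'
    (fun r hr => eq_rpow_smul_leftEigen hlam hc hode hr) ?_
  set α : ℂ := -(Complex.I * n)
  set β : ℂ := (lam : ℂ) + (2 + k) / 2
  refine integrableOn_sq_mul_norm_sq_of_le (C := ‖α‖ ^ 2 + ‖β‖ ^ 2) measurableSet_Ioo hw
    (continuousOn_leftEigen (hc.mono Ioo_subset_Ioc_self)) fun r _ => ?_
  simpa only [leftEigen, smul_eq_mul] using norm_smul_add_smul_sq_le α β (v r).1 (v r).2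

theorem eq_zero_of_leftEigen_eq_zero (hn : n ≠ 0) {lam lam' : ℝ} (hne : lam ≠ lam')
    {x : ℂ × ℂ} (h : leftEigen k n lam x = 0) (h' : leftEigen k n lam' x = 0) : x = 0 := by
  simp only [leftEigen] at h h'
  have h₂ : x.2 = 0 := by
    have hsub : ((lam : ℂ) - lam') * x.2 = 0 := by linear_combination h - h'
    simpa [sub_eq_zero, hne] using hsub
  have h₁ : x.1 = 0 := by simpa [h₂, hn, Complex.I_ne_zero] using h
  exact Prod.ext h₁ h₂

theorem eq_zero_of_interior (hn : n ≠ 0) {μ : ℝ} (hμ : μ ^ 2 = k ^ 2 / 4 + n ^ 2) (hμ0 : μ ≠ 0)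
    {v : ℝ → ℂ × ℂ} (hc : ContinuousOn v (Ioc 0 1)) (hode : SolvesInterior k n v)
    (hv : v 1 = 0) {r : ℝ} (hr : r ∈ Ioc 0 1) : v r = 0 := by
  have hℓ : ∀ lam : ℝ, (lam + 1) ^ 2 = k ^ 2 / 4 + n ^ 2 → leftEigen k n lam (v r) = 0 :=
    fun lam hlam => by
      rw [eq_rpow_smul_leftEigen hlam hc hode hr, hv]
      simp [leftEigen]
  refine eq_zero_of_leftEigen_eq_zero hn (lam := -1 + μ) (lam' := -1 - μ) ?_
    (hℓ _ (by linear_combination hμ)) (hℓ _ (by linear_combination hμ))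
  exact fun h => hμ0 (by linarith)

theorem snd_eq_zero_of_interior {μ : ℝ} (hμ : μ ^ 2 = k ^ 2 / 4 + n ^ 2) (hμk : μ ≠ k / 2)
    (hμ' : 1 / 2 ≤ μ) {v : ℝ → ℂ × ℂ} (hc : ContinuousOn v (Ioc 0 1)) (hode : SolvesInterior k n v)
    (hw : IntegrableOn (fun r => r ^ 2 * (‖(v r).1‖ ^ 2 + ‖(v r).2‖ ^ 2)) (Ioo 0 1))
    (h₁ : (v 1).1 = 0) : (v 1).2 = 0 := by
  have hdecay := leftEigen_eq_zero_of_integrableOn (lam := -1 - μ) (by linear_combination hμ)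
    (by linarith) hc hode hw
  have hℓ : leftEigen k n (-1 - μ) (v 1) = ((k / 2 - μ : ℝ) : ℂ) * (v 1).2 := by
    simp only [leftEigen, h₁]
    push_cast
    ring
  rw [hℓ] at hdecay
  exact (mul_eq_zero.1 hdecay).resolve_left
    (Complex.ofReal_ne_zero.2 (sub_ne_zero.2 hμk.symm))

end Monopole

open Monopole

/-- Radial model of the Dirac operator of a flat Dirac monopole of weight `k ≥ 1`
with constant imaginary mass `a > 0`: a continuous `v : (0,∞) → ℂ²` solving
`v' = (1/r) A v` on `(0,1)` and `v' = B v` on `(1,∞)` (where `A` has rows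
`(-(2+k)/2, i n)`, `(-i n, -(2-k)/2)` and `B = diag(a, -a)`) which is `L²` for the
measure `r² dr` vanishes identically. -/
theorem stmt_7 (k n a : ℝ) (hk : 1 ≤ k) (hn : n ≠ 0) (ha : 0 < a)
    (v : ℝ → ℂ × ℂ) (hcont : ContinuousOn v (Ioi 0))
    (hode1 : ∀ r ∈ Ioo (0:ℝ) 1,
      HasDerivAt v
        (((-(2 + (k:ℂ))/2 * (v r).1 + Complex.I * (n:ℂ) * (v r).2) / (r:ℂ),
          (-(Complex.I * (n:ℂ)) * (v r).1 - (2 - (k:ℂ))/2 * (v r).2) / (r:ℂ))) r)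
    (hode2 : ∀ r ∈ Ioi (1:ℝ),
      HasDerivAt v (((a:ℂ) * (v r).1, -(a:ℂ) * (v r).2)) r)
    (hL2 : ∫⁻ r in Ioi (0:ℝ),
        ENNReal.ofReal (r^2 * (‖(v r).1‖^2 + ‖(v r).2‖^2)) < ⊤) :
    ∀ r ∈ Ioi (0:ℝ), v r = 0 := by
  have hw : IntegrableOn (fun r => r ^ 2 * (‖(v r).1‖ ^ 2 + ‖(v r).2‖ ^ 2)) (Ioi 0) :=
    integrableOn_of_lintegral_ofReal_lt_top measurableSet_Ioi (by fun_prop)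
      (fun r _ => by positivity) hL2
  have hcIci : ContinuousOn v (Ici 1) := hcont.mono (Ici_subset_Ioi.2 one_pos)
  have hcIoc : ContinuousOn v (Ioc 0 1) := hcont.mono Ioc_subset_Ioi_self
  obtain ⟨μ, hμ, hkμ⟩ : ∃ μ : ℝ, μ ^ 2 = k ^ 2 / 4 + n ^ 2 ∧ k / 2 < μ :=
    ⟨√(k ^ 2 / 4 + n ^ 2), Real.sq_sqrt (by positivity),
      Real.lt_sqrt_of_sq_lt (by nlinarith [sq_pos_of_ne_zero hn])⟩
  have h₁ := fst_eq_zero_of_exterior ha.le hcIci hode2 (hw.mono_set (Ioi_subset_Ioi zero_le_one))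
  have h₂ := snd_eq_zero_of_interior hμ hkμ.ne' (by linarith) hcIoc hode1
    (hw.mono_set Ioo_subset_Ioi_self) h₁
  have hv1 : v 1 = 0 := Prod.ext h₁ h₂
  intro r hr
  rcases le_or_gt r 1 with hr1 | hr1
  · exact eq_zero_of_interior hn hμ (by linarith) hcIoc hode1 hv1 ⟨hr, hr1⟩
  · simp [eq_exp_smul_of_exterior hcIci hode2 hr1.le, hv1]
end

section
/- Suppose k ≥ 1 and n ≠ 0, and set s = (k²/4 + n²)^{1/2} and λ₊ = −1 + s. Let r₀ > 0 and let v : (0,r₀) → ℂ² be differentiable with v′(r) = (1/r)·A·v(r) for all r ∈ (0,r₀). If ∫₀^{r₀} r²‖v(r)‖² dr < ∞, then there exists a vector w ∈ ℂ² with A·w = λ₊·w such that v(r) = r^{λ₊}·w for all r ∈ (0,r₀). -/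
/-!
The eigenvalues of `A` are `-1 ± s`. Pairing `v` with the left eigenvectors `(-i n, k/2 ± s)`
decouples the system into two scalar Euler equations `f' = (μ/r) f`, whose solutions are
`C r^μ`. For `μ = -1 - s` the function `r^μ` is not square integrable against `r² dr` near `0`,
since `s > 1/2`, so that coordinate vanishes; the remaining one then determines `v` as
`r^{λ₊}` times an eigenvector for `λ₊ = -1 + s`.
-/

open MeasureTheory Set

theorem exists_eq_cpow_mul_of_hasDerivAt {s : Set ℝ} (hs : IsOpen s) (hs' : IsPreconnected s)
    (hpos : s ⊆ Ioi 0) {f : ℝ → ℂ} {c : ℂ} (hf : ∀ r ∈ s, HasDerivAt f (c * f r / r) r) :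
    ∃ C : ℂ, ∀ r ∈ s, f r = (r : ℂ) ^ c * C := by
  have hderiv : ∀ r ∈ s, HasDerivAt (fun t : ℝ => (t : ℂ) ^ (-c) * f t) 0 r := by
    intro r hr
    have hr0 : (r : ℂ) ≠ 0 := Complex.ofReal_ne_zero.mpr (hpos hr).ne'
    have hslit : (r : ℂ) ∈ Complex.slitPlane := Complex.ofReal_mem_slitPlane.mpr (hpos hr)
    have hpow := ((hasDerivAt_id (r : ℂ)).cpow_const (c := -c) hslit).comp_ofReal
    refine (hpow.mul (hf r hr)).congr_deriv ?_
    simp only [id, mul_one]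
    rw [Complex.cpow_sub _ _ hr0, Complex.cpow_one]
    field_simp
    ring
  obtain ⟨C, hC⟩ := hs.exists_is_const_of_deriv_eq_zero hs'
    (fun r hr => (hderiv r hr).differentiableAt.differentiableWithinAt)
    (fun r hr => (hderiv r hr).deriv)
  refine ⟨C, fun r hr => ?_⟩
  have hr0 : (r : ℂ) ≠ 0 := Complex.ofReal_ne_zero.mpr (hpos hr).ne'
  rw [← hC r hr, ← mul_assoc, ← Complex.cpow_add _ _ hr0, add_neg_cancel, Complex.cpow_zero,
    one_mul]

theorem norm_mul_add_mul_sq_le {R : Type*} [SeminormedRing R] (a b x y : R) :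
    ‖a * x + b * y‖ ^ 2 ≤ (‖a‖ ^ 2 + ‖b‖ ^ 2) * (‖x‖ ^ 2 + ‖y‖ ^ 2) := by
  have htri : ‖a * x + b * y‖ ≤ ‖a‖ * ‖x‖ + ‖b‖ * ‖y‖ :=
    (norm_add_le _ _).trans (add_le_add (norm_mul_le _ _) (norm_mul_le _ _))
  calc ‖a * x + b * y‖ ^ 2 ≤ (‖a‖ * ‖x‖ + ‖b‖ * ‖y‖) ^ 2 := by gcongr
    _ ≤ _ := by nlinarith [sq_nonneg (‖a‖ * ‖y‖ - ‖b‖ * ‖x‖)]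

theorem lintegral_ofReal_mul_norm_mul_add_mul_sq_lt_top {α : Type*} [MeasurableSpace α]
    {μ : Measure α} {w : α → ℝ} (hw : 0 ≤ w) {g h : α → ℂ} (a b : ℂ)
    (hgh : ∫⁻ x, ENNReal.ofReal (w x * (‖g x‖ ^ 2 + ‖h x‖ ^ 2)) ∂μ < ⊤) :
    ∫⁻ x, ENNReal.ofReal (w x * ‖a * g x + b * h x‖ ^ 2) ∂μ < ⊤ := by
  set K := ‖a‖ ^ 2 + ‖b‖ ^ 2
  calc ∫⁻ x, ENNReal.ofReal (w x * ‖a * g x + b * h x‖ ^ 2) ∂μ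
      ≤ ∫⁻ x, ENNReal.ofReal K * ENNReal.ofReal (w x * (‖g x‖ ^ 2 + ‖h x‖ ^ 2)) ∂μ := by
        refine lintegral_mono fun x => ?_
        rw [← ENNReal.ofReal_mul (by positivity)]
        refine ENNReal.ofReal_le_ofReal ?_
        have := mul_le_mul_of_nonneg_left (norm_mul_add_mul_sq_le a b (g x) (h x)) (hw x)
        linarith
    _ = ENNReal.ofReal K * ∫⁻ x, ENNReal.ofReal (w x * (‖g x‖ ^ 2 + ‖h x‖ ^ 2)) ∂μ :=
        lintegral_const_mul' _ _ ENNReal.ofReal_ne_top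
    _ < ⊤ := ENNReal.mul_lt_top ENNReal.ofReal_lt_top hgh

theorem neg_one_lt_of_setLIntegral_rpow_lt_top {r₀ p : ℝ} (hr₀ : 0 < r₀)
    (h : ∫⁻ r in Ioo 0 r₀, ENNReal.ofReal (r ^ p) < ⊤) : -1 < p := by
  rw [← intervalIntegral.integrableOn_Ioo_rpow_iff hr₀]
  refine ⟨(continuousOn_id.rpow_const fun r hr => Or.inl hr.1.ne').aestronglyMeasurable
    measurableSet_Ioo, ?_⟩
  rwa [hasFiniteIntegral_iff_ofReal ((ae_restrict_iff' measurableSet_Ioo).2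
    (ae_of_all _ fun r hr => Real.rpow_nonneg hr.1.le p))]

theorem eq_zero_of_setLIntegral_sq_mul_norm_sq_lt_top {r₀ : ℝ} (hr₀ : 0 < r₀) {c C : ℂ}
    (hc : c.re ≤ -3 / 2) {f : ℝ → ℂ} (hf : ∀ r ∈ Ioo 0 r₀, f r = (r : ℂ) ^ c * C)
    (hL2 : ∫⁻ r in Ioo 0 r₀, ENNReal.ofReal (r ^ 2 * ‖f r‖ ^ 2) < ⊤) : C = 0 := by
  by_contra hC
  have hweight : ∀ r ∈ Ioo 0 r₀, ENNReal.ofReal (r ^ 2 * ‖f r‖ ^ 2) =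
      ENNReal.ofReal (‖C‖ ^ 2) * ENNReal.ofReal (r ^ (2 * c.re + 2)) := by
    intro r hr
    rw [← ENNReal.ofReal_mul (by positivity), hf r hr, norm_mul,
      Complex.norm_cpow_eq_rpow_re_of_pos hr.1, Real.rpow_add hr.1, mul_comm 2 c.re,
      Real.rpow_mul hr.1.le, Real.rpow_two, Real.rpow_two]
    ring_nf
  rw [setLIntegral_congr_fun measurableSet_Ioo hweight,
    lintegral_const_mul' _ _ ENNReal.ofReal_ne_top] at hL2
  have := neg_one_lt_of_setLIntegral_rpow_lt_top hr₀ (ENNReal.lt_top_of_mul_ne_top_right hL2.ne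
    (by simpa using hC))
  linarith

section EulerSystem

open Complex

/-- For `σ ^ 2 = k ^ 2 / 4 + n ^ 2`, `(-i n, k/2 + σ)` is a left eigenvector of `A` with
eigenvalue `σ - 1`. -/
noncomputable def leftEigencoord (k n σ : ℝ) (x : ℂ × ℂ) : ℂ :=
  -(I * n) * x.1 + ((k : ℂ) / 2 + σ) * x.2

noncomputable def rightEigenvector (k n s : ℝ) (t : ℂ) : ℂ × ℂ :=
  (((k : ℂ) / 2 - s) / (I * n) * t, t)

variable {k n s : ℝ}

theorem hasDerivAt_leftEigencoord {σ r : ℝ} {v : ℝ → ℂ × ℂ} (hσ : σ ^ 2 = k ^ 2 / 4 + n ^ 2)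
    (hr : r ≠ 0)
    (hv : HasDerivAt v
      (((-(2 + (k:ℂ))/2 * (v r).1 + I * (n:ℂ) * (v r).2) / (r:ℂ),
        (-(I * (n:ℂ)) * (v r).1 - (2 - (k:ℂ))/2 * (v r).2) / (r:ℂ))) r) :
    HasDerivAt (fun t => leftEigencoord k n σ (v t))
      ((σ - 1) * leftEigencoord k n σ (v r) / r) r := by
  have hr' : (r : ℂ) ≠ 0 := ofReal_ne_zero.mpr hr
  have hσ' : (σ : ℂ) ^ 2 = (k : ℂ) ^ 2 / 4 + (n : ℂ) ^ 2 := by exact_mod_cast hσ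
  refine (((hasFDerivAt_fst.comp_hasDerivAt r hv).const_mul (-(I * n))).add
    ((hasFDerivAt_snd.comp_hasDerivAt r hv).const_mul ((k : ℂ) / 2 + σ))).congr_deriv ?_
  simp only [ContinuousLinearMap.coe_fst', ContinuousLinearMap.coe_snd', leftEigencoord]
  field_simp
  linear_combination (-4 * (v r).2) * hσ' + (-4 * (v r).2 * (n : ℂ) ^ 2) * I_sq

theorem rightEigenvector_eigen (hn : n ≠ 0) (hs : s ^ 2 = k ^ 2 / 4 + n ^ 2) (t : ℂ) :
    -(2 + (k:ℂ))/2 * (rightEigenvector k n s t).1 + I * n * (rightEigenvector k n s t).2 =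
        (-1 + s) * (rightEigenvector k n s t).1 ∧
      -(I * n) * (rightEigenvector k n s t).1 - (2 - (k:ℂ))/2 * (rightEigenvector k n s t).2 =
        (-1 + s) * (rightEigenvector k n s t).2 := by
  have hs' : (s : ℂ) ^ 2 = (k : ℂ) ^ 2 / 4 + (n : ℂ) ^ 2 := by exact_mod_cast hs
  have hn' : (n : ℂ) ≠ 0 := ofReal_ne_zero.mpr hn
  simp only [rightEigenvector]
  constructor
  · field_simp
    linear_combination (4 * t) * hs' + (4 * t * (n : ℂ) ^ 2) * I_sq
  · field_simp
    ring

theorem smul_rightEigenvector (a : ℝ) (t : ℂ) :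
    a • rightEigenvector k n s t = rightEigenvector k n s (a * t) := by
  ext <;> simp only [rightEigenvector, Prod.smul_fst, Prod.smul_snd, real_smul]
  ring

theorem eq_rightEigenvector_of_leftEigencoord_eq_zero (hn : n ≠ 0) (hs : s ≠ 0) {x : ℂ × ℂ}
    (hx : leftEigencoord k n (-s) x = 0) :
    x = rightEigenvector k n s (leftEigencoord k n s x / (2 * s)) := by
  have hn' : (n : ℂ) ≠ 0 := ofReal_ne_zero.mpr hn
  have hs' : (s : ℂ) ≠ 0 := ofReal_ne_zero.mpr hs
  simp only [leftEigencoord, rightEigenvector, ofReal_neg] at hx ⊢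
  ext
  · field_simp
    linear_combination (-2 * ((k : ℂ) + 2 * s)) * hx
  · field_simp
    linear_combination (-2 : ℂ) * hx

end EulerSystem

/-- For `k ≥ 1`, `n ≠ 0`, `s = (k²/4 + n²)^{1/2}` and `λ₊ = -1 + s`: any solution
`v : (0,r₀) → ℂ²` of the Euler system `v' = (1/r) A v` (where `A` has rows
`(-(2+k)/2, i n)`, `(-i n, -(2-k)/2)`) that is `L²` for `r² dr` is of the form
`v(r) = r^{λ₊} w` with `A w = λ₊ w`. -/
theorem stmt_9 (k n : ℝ) (hk : 1 ≤ k) (hn : n ≠ 0)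
    (s lam : ℝ) (hs : s = Real.sqrt (k^2/4 + n^2)) (hlam : lam = -1 + s)
    (r₀ : ℝ) (hr₀ : 0 < r₀) (v : ℝ → ℂ × ℂ)
    (hode : ∀ r ∈ Ioo (0:ℝ) r₀,
      HasDerivAt v
        (((-(2 + (k:ℂ))/2 * (v r).1 + Complex.I * (n:ℂ) * (v r).2) / (r:ℂ),
          (-(Complex.I * (n:ℂ)) * (v r).1 - (2 - (k:ℂ))/2 * (v r).2) / (r:ℂ))) r)
    (hL2 : ∫⁻ r in Ioo (0:ℝ) r₀,
        ENNReal.ofReal (r^2 * (‖(v r).1‖^2 + ‖(v r).2‖^2)) < ⊤) :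
    ∃ w : ℂ × ℂ,
      (-(2 + (k:ℂ))/2 * w.1 + Complex.I * (n:ℂ) * w.2 = (lam:ℂ) * w.1 ∧
        -(Complex.I * (n:ℂ)) * w.1 - (2 - (k:ℂ))/2 * w.2 = (lam:ℂ) * w.2) ∧
      ∀ r ∈ Ioo (0:ℝ) r₀, v r = (r ^ lam) • w := by
  have hs2 : s ^ 2 = k ^ 2 / 4 + n ^ 2 := hs ▸ Real.sq_sqrt (by positivity)
  have hs_gt : 1 / 2 < s := by
    nlinarith [hs ▸ Real.sqrt_nonneg (k ^ 2 / 4 + n ^ 2), sq_pos_of_ne_zero hn]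
  have hcoord (σ : ℝ) (hσ : σ ^ 2 = k ^ 2 / 4 + n ^ 2) :=
    exists_eq_cpow_mul_of_hasDerivAt isOpen_Ioo isPreconnected_Ioo Ioo_subset_Ioi_self
      fun r hr => hasDerivAt_leftEigencoord hσ hr.1.ne' (hode r hr)
  obtain ⟨Cneg, hCneg⟩ := hcoord (-s) (by rw [neg_sq, hs2])
  obtain ⟨Cpos, hCpos⟩ := hcoord s hs2
  have hCneg_zero : Cneg = 0 :=
    eq_zero_of_setLIntegral_sq_mul_norm_sq_lt_top hr₀
      (by simp only [Complex.sub_re, Complex.ofReal_re, Complex.one_re]; linarith) hCneg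
      (lintegral_ofReal_mul_norm_mul_add_mul_sq_lt_top (fun r => sq_nonneg r) _ _ hL2)
  refine ⟨rightEigenvector k n s (Cpos / (2 * s)),
    by simpa [hlam] using rightEigenvector_eigen hn hs2 _, fun r hr => ?_⟩
  have hvr : leftEigencoord k n (-s) (v r) = 0 := by rw [hCneg r hr, hCneg_zero, mul_zero]
  rw [eq_rightEigenvector_of_leftEigencoord_eq_zero hn (by linarith) hvr, hCpos r hr,
    smul_rightEigenvector, Complex.ofReal_cpow hr.1.le, hlam]
  push_cast
  rw [neg_add_eq_sub, mul_div_assoc]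
end

section
/- Let a > 0 and k ≥ 1 be real numbers. (i) If s : (0,∞) → ℂ is differentiable with s′(r) = −((1+k)/r + a)·s(r) for all r ∈ (0,∞) and ∫₀^∞ r²|s(r)|² dr < ∞, then s is identically zero. (ii) If s : (0,∞) → ℂ is differentiable with s′(r) = ((k−1)/r + a)·s(r) for all r ∈ (0,∞) and ∫₀^∞ r²|s(r)|² dr < ∞, then s is identically zero. -/
open MeasureTheory Set

/-!
The equation `s' = (c/r + b) s` integrates explicitly: `s r = s 1 * r ^ c * exp (b (r - 1))`, so
`r² ‖s r‖² = ‖s 1‖² r ^ (2c + 2) exp (2b (r - 1))`. In case (i), `c = -(1 + k)`, this is of order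
`r ^ (-2k)` near `0`, which is not integrable since `k ≥ 1/2`; in case (ii), `c = k - 1` and `b = a`,
it is at least `‖s 1‖²` on `(1, ∞)`. Either way finiteness of the integral forces `s 1 = 0`.
-/

theorem hasDerivAt_rpow_mul_exp {b c r : ℝ} (hr : 0 < r) :
    HasDerivAt (fun x ↦ x ^ c * Real.exp (b * (x - 1)))
      ((c / r + b) * (r ^ c * Real.exp (b * (r - 1)))) r := by
  have hexp : HasDerivAt (fun x ↦ Real.exp (b * (x - 1))) (Real.exp (b * (r - 1)) * b) r :=
    (((hasDerivAt_id r).sub_const 1).const_mul b).exp.congr_deriv (by simp)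
  refine ((Real.hasDerivAt_rpow_const (Or.inl hr.ne')).mul hexp).congr_deriv ?_
  rw [Real.rpow_sub_one hr.ne']
  field_simp

theorem eq_mul_rpow_mul_exp_of_hasDerivAt {b c : ℝ} {s : ℝ → ℂ}
    (hs : ∀ r ∈ Ioi (0:ℝ), HasDerivAt s (((c / r + b : ℝ) : ℂ) * s r) r) {r : ℝ} (hr : 0 < r) :
    s r = s 1 * ((r ^ c * Real.exp (b * (r - 1)) : ℝ) : ℂ) := by
  set ψ : ℝ → ℝ := fun x ↦ x ^ (-c) * Real.exp (-b * (x - 1))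
  have hψ : ∀ x ∈ Ioi (0:ℝ), HasDerivAt (fun x ↦ s x * ψ x) 0 x := fun x hx ↦
    ((hs x hx).mul (hasDerivAt_rpow_mul_exp hx).ofReal_comp).congr_deriv (by push_cast; ring)
  have hconst : s r * ψ r = s 1 * ψ 1 :=
    isOpen_Ioi.is_const_of_deriv_eq_zero (convex_Ioi 0).isPreconnected
      (fun x hx ↦ (hψ x hx).differentiableAt.differentiableWithinAt)
      (fun x hx ↦ (hψ x hx).deriv) hr (mem_Ioi.2 one_pos)
  have hψ1 : ψ 1 = 1 := by simp [ψ]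
  have hψr : ψ r * (r ^ c * Real.exp (b * (r - 1))) = 1 := by
    rw [mul_mul_mul_comm, Real.rpow_neg hr.le, ← Real.exp_add, neg_mul, neg_add_cancel,
      Real.exp_zero, inv_mul_cancel₀ (Real.rpow_pos_of_pos hr c).ne', one_mul]
  calc s r = s r * ψ r * ((r ^ c * Real.exp (b * (r - 1)) : ℝ) : ℂ) := by
        rw [mul_assoc, ← Complex.ofReal_mul, hψr, Complex.ofReal_one, mul_one]
    _ = _ := by rw [hconst, hψ1, Complex.ofReal_one, mul_one]

theorem sq_mul_norm_sq_eq_of_hasDerivAt {b c : ℝ} {s : ℝ → ℂ}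
    (hs : ∀ r ∈ Ioi (0:ℝ), HasDerivAt s (((c / r + b : ℝ) : ℂ) * s r) r) {r : ℝ} (hr : 0 < r) :
    r ^ 2 * ‖s r‖ ^ 2 = ‖s 1‖ ^ 2 * (r ^ (2 * c + 2) * Real.exp (2 * b * (r - 1))) := by
  have hexp : Real.exp (2 * b * (r - 1)) = Real.exp (b * (r - 1)) ^ 2 := by
    rw [sq, ← Real.exp_add]
    ring_nf
  rw [eq_mul_rpow_mul_exp_of_hasDerivAt hs hr, norm_mul, Complex.norm_real,
    Real.norm_of_nonneg (by positivity), mul_comm 2 c, Real.rpow_add hr, Real.rpow_mul hr.le,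
    Real.rpow_two, Real.rpow_two, hexp]
  ring

theorem setLIntegral_ofReal_eq_top_of_const_le {α : Type*} [MeasurableSpace α] {μ : Measure α}
    {S : Set α} {g : α → ℝ} {c : ℝ} (hS : MeasurableSet S) (hμS : μ S = ⊤) (hc : 0 < c)
    (hg : ∀ x ∈ S, c ≤ g x) : ∫⁻ x in S, ENNReal.ofReal (g x) ∂μ = ⊤ := by
  refine top_le_iff.1 ?_
  calc ⊤ = ∫⁻ _ in S, ENNReal.ofReal c ∂μ := by
        rw [setLIntegral_const, hμS, ENNReal.mul_top (by simpa using hc)]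
    _ ≤ _ := setLIntegral_mono' hS fun x hx ↦ ENNReal.ofReal_le_ofReal (hg x hx)

theorem lintegral_rpow_Ioo_eq_top {p t : ℝ} (hp : p ≤ -1) (ht : 0 < t) :
    ∫⁻ r in Ioo 0 t, ENNReal.ofReal (r ^ p) = ⊤ := by
  by_contra h
  have : IntegrableOn (fun r ↦ r ^ p) (Ioo 0 t) :=
    (lintegral_ofReal_ne_top_iff_integrable (by fun_prop) ?_).1 h
  · rw [intervalIntegral.integrableOn_Ioo_rpow_iff ht] at this
    linarith
  · exact (ae_restrict_iff' measurableSet_Ioo).2 (.of_forall fun r hr ↦ Real.rpow_nonneg hr.1.le p)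

theorem setLIntegral_Ioo_ofReal_eq_top_of_rpow_le {g : ℝ → ℝ} {c p t : ℝ} (hp : p ≤ -1)
    (ht : 0 < t) (hc : 0 < c) (hg : ∀ r ∈ Ioo 0 t, c * r ^ p ≤ g r) :
    ∫⁻ r in Ioo 0 t, ENNReal.ofReal (g r) = ⊤ := by
  refine top_le_iff.1 ?_
  calc ⊤ = ∫⁻ r in Ioo 0 t, ENNReal.ofReal (c * r ^ p) := by
        simp_rw [ENNReal.ofReal_mul hc.le]
        rw [lintegral_const_mul' _ _ ENNReal.ofReal_ne_top, lintegral_rpow_Ioo_eq_top hp ht,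
          ENNReal.mul_top (by simpa using hc)]
    _ ≤ _ := setLIntegral_mono' measurableSet_Ioo fun r hr ↦ ENNReal.ofReal_le_ofReal (hg r hr)

theorem eq_zero_of_hasDerivAt_of_lintegral_lt_top_of_le {b c : ℝ} {s : ℝ → ℂ} (hc : c ≤ -3 / 2)
    (hs : ∀ r ∈ Ioi (0:ℝ), HasDerivAt s (((c / r + b : ℝ) : ℂ) * s r) r)
    (hfin : ∫⁻ r in Ioi (0:ℝ), ENNReal.ofReal (r ^ 2 * ‖s r‖ ^ 2) < ⊤) :
    ∀ r ∈ Ioi (0:ℝ), s r = 0 := by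
  suffices h1 : s 1 = 0 by
    intro r hr
    rw [eq_mul_rpow_mul_exp_of_hasDerivAt hs hr, h1, zero_mul]
  by_contra h1
  have hbound : ∀ r ∈ Ioo (0:ℝ) 1,
      ‖s 1‖ ^ 2 * Real.exp (-2 * |b|) * r ^ (2 * c + 2) ≤ r ^ 2 * ‖s r‖ ^ 2 := by
    intro r hr
    have hbr : |b * (r - 1)| ≤ |b| := by
      rw [abs_mul]
      exact mul_le_of_le_one_right (abs_nonneg b) (abs_le.2 ⟨by linarith [hr.1], by linarith [hr.2]⟩)
    rw [sq_mul_norm_sq_eq_of_hasDerivAt hs hr.1, mul_assoc, mul_comm (Real.exp _)]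
    gcongr ‖s 1‖ ^ 2 * (_ * Real.exp ?_)
    · exact Real.rpow_nonneg hr.1.le _
    · linarith [neg_abs_le (b * (r - 1))]
  refine hfin.ne (top_le_iff.1 ?_)
  calc ⊤ = ∫⁻ r in Ioo 0 1, ENNReal.ofReal (r ^ 2 * ‖s r‖ ^ 2) :=
        (setLIntegral_Ioo_ofReal_eq_top_of_rpow_le (by linarith) one_pos
          (by positivity) hbound).symm
    _ ≤ _ := lintegral_mono_set Ioo_subset_Ioi_self

theorem eq_zero_of_hasDerivAt_of_lintegral_lt_top_of_nonneg {b c : ℝ} {s : ℝ → ℂ} (hc : -1 ≤ c)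
    (hb : 0 ≤ b) (hs : ∀ r ∈ Ioi (0:ℝ), HasDerivAt s (((c / r + b : ℝ) : ℂ) * s r) r)
    (hfin : ∫⁻ r in Ioi (0:ℝ), ENNReal.ofReal (r ^ 2 * ‖s r‖ ^ 2) < ⊤) :
    ∀ r ∈ Ioi (0:ℝ), s r = 0 := by
  suffices h1 : s 1 = 0 by
    intro r hr
    rw [eq_mul_rpow_mul_exp_of_hasDerivAt hs hr, h1, zero_mul]
  by_contra h1
  have hbound : ∀ r ∈ Ioi (1:ℝ), ‖s 1‖ ^ 2 ≤ r ^ 2 * ‖s r‖ ^ 2 := by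
    intro r hr
    rw [sq_mul_norm_sq_eq_of_hasDerivAt hs (one_pos.trans hr)]
    refine le_mul_of_one_le_right (sq_nonneg _) (one_le_mul_of_one_le_of_one_le ?_ ?_)
    · exact Real.one_le_rpow (le_of_lt hr) (by linarith)
    · exact Real.one_le_exp (mul_nonneg (by positivity) (sub_nonneg.2 (le_of_lt hr)))
  refine hfin.ne (top_le_iff.1 ?_)
  calc ⊤ = ∫⁻ r in Ioi 1, ENNReal.ofReal (r ^ 2 * ‖s r‖ ^ 2) :=
        (setLIntegral_ofReal_eq_top_of_const_le measurableSet_Ioi Real.volume_Ioi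
          (by positivity) hbound).symm
    _ ≤ _ := lintegral_mono_set (Ioi_subset_Ioi zero_le_one)

/-- Kernel equations of the Dirac operator of the flat Dirac monopole of weight
`k ≥ 1` with constant imaginary mass `a > 0` in the harmonic sector: any
differentiable `s : (0,∞) → ℂ` with `s'(r) = -((1+k)/r + a) s(r)` (resp.
`s'(r) = ((k-1)/r + a) s(r)`) that is `L²` for `r² dr` vanishes identically. -/
theorem stmt_11 (a k : ℝ) (ha : 0 < a) (hk : 1 ≤ k) :
    (∀ s : ℝ → ℂ,
      (∀ r ∈ Ioi (0:ℝ), HasDerivAt s (-((((1 + k)/r + a : ℝ) : ℂ)) * s r) r) →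
      (∫⁻ r in Ioi (0:ℝ), ENNReal.ofReal (r^2 * ‖s r‖^2) < ⊤) →
      ∀ r ∈ Ioi (0:ℝ), s r = 0) ∧
    (∀ s : ℝ → ℂ,
      (∀ r ∈ Ioi (0:ℝ), HasDerivAt s (((((k - 1)/r + a : ℝ) : ℂ)) * s r) r) →
      (∫⁻ r in Ioi (0:ℝ), ENNReal.ofReal (r^2 * ‖s r‖^2) < ⊤) →
      ∀ r ∈ Ioi (0:ℝ), s r = 0) := by
  refine ⟨fun s hs hfin ↦ ?_, fun s hs hfin ↦
    eq_zero_of_hasDerivAt_of_lintegral_lt_top_of_nonneg (by linarith) ha.le hs hfin⟩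
  have hs' : ∀ r ∈ Ioi (0:ℝ), HasDerivAt s (((-(1 + k) / r + -a : ℝ) : ℂ) * s r) r :=
    fun r hr ↦ (hs r hr).congr_deriv (by push_cast; ring)
  exact eq_zero_of_hasDerivAt_of_lintegral_lt_top_of_le (by linarith) hs' hfin
end
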